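/- Let n ≥ 1, λ, μ ∈ ℝ with δ = μ−λ ≠ 1, α = λ/(1−δ). For a smooth pseudo-Riemannian metric on ℝⁿ given by a smooth field of invertible symmetric n×n matrices (g_{ij}), set Γ_i(g) = (1/2) g^{jk}∂_i g_{jk} (= Γ_{ij}^j, the trace of the Christoffel symbols), and define the first-order quantization Q_g(P₁,P₀)f = P₁^i(∂_i f − λ Γ_i(g) f) + α( ∂_iP₁^i + (1−δ)Γ_i(g)P₁^i ) f + P₀ f. Then Q_g is conformally invariant: for every smooth function F : ℝⁿ → ℝ with F > 0 everywhere, Q_{Fg} = Q_g, i.e. Q_{Fg}(P₁,P₀)f = Q_g(P₁,P₀)f for all symbols (P₁,P₀) and all smooth f. -/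
import Mathlib


open scoped BigOperators

noncomputable section

/-- Partial derivative of a function on `ℝⁿ` in the `i`-th coordinate direction. -/
def pd {n : ℕ} (i : Fin n) (f : (Fin n → ℝ) → ℝ) : (Fin n → ℝ) → ℝ :=
  fun x => fderiv ℝ f x (Pi.single i 1)

/-- Diagonal entries of the flat metric of signature `(p, n−p)`. -/
def sgn (p : ℕ) {n : ℕ} (i : Fin n) : ℝ := if (i : ℕ) < p then 1 else -1

/-- Flat metric `g_{ij} = g^{ij} = diag(1,…,1,−1,…,−1)`. -/
def gmet (p : ℕ) {n : ℕ} (i j : Fin n) : ℝ := if i = j then sgn p i else 0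

/-- Divergence of a vector field on `ℝⁿ`. -/
def divg {n : ℕ} (X : Fin n → (Fin n → ℝ) → ℝ) : (Fin n → ℝ) → ℝ :=
  fun x => ∑ k, pd k (X k) x

/-- Lie derivative of a weight-`l` density (in the trivialization). -/
def lieF {n : ℕ} (X : Fin n → (Fin n → ℝ) → ℝ) (l : ℝ) (f : (Fin n → ℝ) → ℝ) :
    (Fin n → ℝ) → ℝ :=
  fun x => (∑ k, X k x * pd k f x) + l * divg X x * f x

/-- Weight-`d` action of a vector field on the degree-2 component of a symbol. -/
def lieS2 {n : ℕ} (X : Fin n → (Fin n → ℝ) → ℝ) (d : ℝ)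
    (P2 : Fin n → Fin n → (Fin n → ℝ) → ℝ) : Fin n → Fin n → (Fin n → ℝ) → ℝ :=
  fun i j x => (∑ k, X k x * pd k (P2 i j) x) - (∑ k, P2 k j x * pd k (X i) x)
    - (∑ k, P2 i k x * pd k (X j) x) + d * divg X x * P2 i j x

/-- Weight-`d` action of a vector field on the degree-1 component of a symbol. -/
def lieS1 {n : ℕ} (X : Fin n → (Fin n → ℝ) → ℝ) (d : ℝ)
    (P1 : Fin n → (Fin n → ℝ) → ℝ) : Fin n → (Fin n → ℝ) → ℝ :=
  fun i x => (∑ k, X k x * pd k (P1 i) x) - (∑ k, P1 k x * pd k (X i) x)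
    + d * divg X x * P1 i x

/-- The second-order differential operator with coefficients `(A2, A1, A0)`. -/
def op2 {n : ℕ} (A2 : Fin n → Fin n → (Fin n → ℝ) → ℝ) (A1 : Fin n → (Fin n → ℝ) → ℝ)
    (A0 : (Fin n → ℝ) → ℝ) (f : (Fin n → ℝ) → ℝ) : (Fin n → ℝ) → ℝ :=
  fun x => (∑ i, ∑ j, A2 i j x * pd i (pd j f) x) + (∑ i, A1 i x * pd i f x) + A0 x * f x

/-- `Γ_i(g) = ½ g^{jk} ∂_i g_{jk}`, the trace `Γ_{ij}^j` of the Christoffel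
symbols of the metric `g`. -/
def Gam {n : ℕ} (g : (Fin n → ℝ) → Matrix (Fin n) (Fin n) ℝ) (i : Fin n) :
    (Fin n → ℝ) → ℝ :=
  fun x => (1 / 2) * ∑ j, ∑ k, (g x)⁻¹ j k * pd i (fun y => g y j k) x

/-- The first-order quantization associated with the metric `g`:
`Q_g(P₁,P₀) f = P₁^i (∂_i f − λΓ_i f) + α(∂_i P₁^i + (1−δ)Γ_i P₁^i) f + P₀ f`. -/
def Qmet {n : ℕ} (lam dlt a : ℝ) (g : (Fin n → ℝ) → Matrix (Fin n) (Fin n) ℝ)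
    (P1 : Fin n → (Fin n → ℝ) → ℝ) (P0 : (Fin n → ℝ) → ℝ)
    (f : (Fin n → ℝ) → ℝ) : (Fin n → ℝ) → ℝ :=
  fun x => (∑ i, P1 i x * (pd i f x - lam * Gam g i x * f x))
    + a * ((∑ i, pd i (P1 i) x) + (1 - dlt) * ∑ i, Gam g i x * P1 i x) * f x
    + P0 x * f x

/-- the first-order quantization `Q_g` is conformally invariant:
rescaling the metric `g ↦ F g` by a positive smooth function leaves it unchanged. -/
theorem first_order_quantization_conformally_invariant
    (n : ℕ) (hn : 1 ≤ n) (lam mu dlt : ℝ) (hdlt : dlt = mu - lam) (h1 : dlt ≠ 1)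
    (a : ℝ) (ha : a = lam / (1 - dlt))
    (g : (Fin n → ℝ) → Matrix (Fin n) (Fin n) ℝ)
    (hg : ∀ i j, ContDiff ℝ (⊤ : ℕ∞) (fun x => g x i j))
    (hgsym : ∀ x, (g x).IsSymm) (hginv : ∀ x, IsUnit (g x))
    (F : (Fin n → ℝ) → ℝ) (hF : ContDiff ℝ (⊤ : ℕ∞) F) (hFpos : ∀ x, 0 < F x)
    (P1 : Fin n → (Fin n → ℝ) → ℝ) (P0 : (Fin n → ℝ) → ℝ)
    (hP1 : ∀ i, ContDiff ℝ (⊤ : ℕ∞) (P1 i)) (hP0 : ContDiff ℝ (⊤ : ℕ∞) P0)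
    (f : (Fin n → ℝ) → ℝ) (hf : ContDiff ℝ (⊤ : ℕ∞) f) (x : Fin n → ℝ) :
    Qmet lam dlt a (fun y => F y • g y) P1 P0 f x = Qmet lam dlt a g P1 P0 f x := by
  have hne : (1 : ℝ) - dlt ≠ 0 := by
    intro h
    apply h1
    linarith
  have key : a * (1 - dlt) = lam := by
    rw [ha]; field_simp
  have expand : ∀ Γ : Fin n → ℝ,
      (∑ i, P1 i x * (pd i f x - lam * Γ i * f x))
        + a * ((∑ i, pd i (P1 i) x) + (1 - dlt) * ∑ i, Γ i * P1 i x) * f x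
        + P0 x * f x
      = (∑ i, P1 i x * pd i f x) + a * (∑ i, pd i (P1 i) x) * f x + P0 x * f x := by
    intro Γ
    have h1' : (∑ i, P1 i x * (pd i f x - lam * Γ i * f x))
        = (∑ i, P1 i x * pd i f x) - lam * (∑ i, Γ i * P1 i x) * f x := by
      rw [Finset.mul_sum, Finset.sum_mul, ← Finset.sum_sub_distrib]
      apply Finset.sum_congr rfl
      intro i _
      ring
    rw [h1']
    have : a * ((∑ i, pd i (P1 i) x) + (1 - dlt) * ∑ i, Γ i * P1 i x) * f x
        = a * (∑ i, pd i (P1 i) x) * f x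
          + (a * (1 - dlt)) * (∑ i, Γ i * P1 i x) * f x := by ring
    rw [this, key]
    ring
  show
    (∑ i, P1 i x * (pd i f x - lam * Gam (fun y => F y • g y) i x * f x))
      + a * ((∑ i, pd i (P1 i) x)
        + (1 - dlt) * ∑ i, Gam (fun y => F y • g y) i x * P1 i x) * f x
      + P0 x * f x
    = (∑ i, P1 i x * (pd i f x - lam * Gam g i x * f x))
      + a * ((∑ i, pd i (P1 i) x) + (1 - dlt) * ∑ i, Gam g i x * P1 i x) * f x
      + P0 x * f x
  rw [expand (fun i => Gam (fun y => F y • g y) i x), expand (fun i => Gam g i x)]
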